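/- Let U, V : ℝ^R → ℝ be differentiable, σ-strongly concave functions with bijective gradients, and suppose ‖∇U(x) - ∇V(x)‖ ≤ α for all x ∈ ℝ^R. Then for every p ∈ ℝ^R, ‖(∇U)⁻¹(p) - (∇V)⁻¹(p)‖ ≤ α/σ. -/

import Mathlib

open RealInnerProductSpace

theorem mul_norm_sub_le_norm_sub_of_strongly_antitone {E : Type*} [NormedAddCommGroup E]
    [InnerProductSpace ℝ E] {f : E → E} {σ : ℝ}
    (hf : ∀ x y, -⟪f x - f y, x - y⟫ ≥ σ * ‖x - y‖ ^ 2) (x y : E) :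
    σ * ‖x - y‖ ≤ ‖f x - f y‖ := by
  rcases (norm_nonneg (x - y)).eq_or_lt with hxy | hxy
  · rw [← hxy, mul_zero]
    exact norm_nonneg _
  · refine le_of_mul_le_mul_right ?_ hxy
    calc σ * ‖x - y‖ * ‖x - y‖ = σ * ‖x - y‖ ^ 2 := by ring
      _ ≤ ⟪-(f x - f y), x - y⟫ := by rw [inner_neg_left]; exact hf x y
      _ ≤ ‖-(f x - f y)‖ * ‖x - y‖ := real_inner_le_norm _ _
      _ = ‖f x - f y‖ * ‖x - y‖ := by rw [norm_neg]

theorem inverse_gradients_close_of_gradients_close_general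
    {R : ℕ} (σ α : ℝ) (hσ : 0 < σ)
    (U V : EuclideanSpace ℝ (Fin R) → ℝ)
    (hUconc : ∀ x y, -⟪gradient U x - gradient U y, x - y⟫ ≥ σ * ‖x - y‖ ^ 2)
    (GU GV : EuclideanSpace ℝ (Fin R) → EuclideanSpace ℝ (Fin R))
    (hGU : ∀ p, gradient U (GU p) = p) (hGV : ∀ p, gradient V (GV p) = p)
    (hclose : ∀ x, ‖gradient U x - gradient V x‖ ≤ α) :
    ∀ p : EuclideanSpace ℝ (Fin R), ‖GU p - GV p‖ ≤ α / σ := by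
  intro p
  rw [le_div_iff₀' hσ]
  calc σ * ‖GU p - GV p‖ ≤ ‖gradient U (GU p) - gradient U (GV p)‖ :=
        mul_norm_sub_le_norm_sub_of_strongly_antitone hUconc _ _
    _ = ‖gradient U (GV p) - gradient V (GV p)‖ := by rw [hGU, hGV, norm_sub_rev]
    _ ≤ α := hclose _

theorem inverse_gradients_close_of_gradients_close
    {R : ℕ} (σ α : ℝ) (hσ : 0 < σ) (hα : 0 ≤ α)
    (U V : EuclideanSpace ℝ (Fin R) → ℝ)
    (hUdiff : Differentiable ℝ U) (hVdiff : Differentiable ℝ V)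
    (hUconc : ∀ x y, -⟪gradient U x - gradient U y, x - y⟫ ≥ σ * ‖x - y‖ ^ 2)
    (hVconc : ∀ x y, -⟪gradient V x - gradient V y, x - y⟫ ≥ σ * ‖x - y‖ ^ 2)
    (hUbij : Function.Bijective (gradient U))
    (hVbij : Function.Bijective (gradient V))
    (GU GV : EuclideanSpace ℝ (Fin R) → EuclideanSpace ℝ (Fin R))
    (hGU : ∀ p, gradient U (GU p) = p) (hGV : ∀ p, gradient V (GV p) = p)
    (hclose : ∀ x, ‖gradient U x - gradient V x‖ ≤ α) :
    ∀ p : EuclideanSpace ℝ (Fin R), ‖GU p - GV p‖ ≤ α / σ :=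
  inverse_gradients_close_of_gradients_close_general σ α hσ U V hUconc GU GV hGU hGV hclose
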